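/- arXiv:1105.2474 — 3 statements merged into one kernel-verified Lean document; each statement's English description precedes it below -/
import Mathlib

section
/- Let M and C be real 3×3 matrices with M invertible, and let u, v ∈ ℝ³ be linearly independent. Define w(t) = ((M + tC)u) × ((M + tC)v) for t ∈ ℝ (so w(0) = (Mu) × (Mv) ≠ 0), and let ν = w(0)/‖w(0)‖. Then the function t ↦ ‖w(t)‖ is differentiable at t = 0 and its derivative equals ‖w(0)‖ · ( tr(C M⁻¹) − ⟨C M⁻¹ ν, ν⟩ ), where ⟨·,·⟩ is the Euclidean inner product and × the cross product in ℝ³. -/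
open Matrix in
lemma key_cross_identity (A : Matrix (Fin 3) (Fin 3) ℝ) (a b : Fin 3 → ℝ) :
    (crossProduct a b) ⬝ᵥ (crossProduct a (A.mulVec b) + crossProduct (A.mulVec a) b)
      = (crossProduct a b ⬝ᵥ crossProduct a b) * A.trace
        - A.mulVec (crossProduct a b) ⬝ᵥ (crossProduct a b) := by
  simp [cross_apply, dotProduct, mulVec, Matrix.trace, Matrix.diag, Fin.sum_univ_three]
  ring

open Matrix in
/-- Pointwise form (d = 3) of Lemma (J) of the paper: derivative at `t = 0` of the
(Euclidean) norm of `w(t) = ((M+tC)u) × ((M+tC)v)` equals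
`‖w(0)‖ (tr(CM⁻¹) − ⟨CM⁻¹ν, ν⟩)` where `ν = w(0)/‖w(0)‖`. -/
theorem stmt4 (M C : Matrix (Fin 3) (Fin 3) ℝ) (hM : IsUnit M)
    (u v : Fin 3 → ℝ) (huv : LinearIndependent ℝ ![u, v])
    (w : ℝ → Fin 3 → ℝ)
    (hw : ∀ t : ℝ, w t = crossProduct ((M + t • C).mulVec u) ((M + t • C).mulVec v))
    (ν : Fin 3 → ℝ) (hν : ν = (Real.sqrt (w 0 ⬝ᵥ w 0))⁻¹ • w 0) :
    HasDerivAt (fun t : ℝ => Real.sqrt (w t ⬝ᵥ w t))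
      (Real.sqrt (w 0 ⬝ᵥ w 0) * ((C * M⁻¹).trace - (C * M⁻¹).mulVec ν ⬝ᵥ ν)) 0 := by
  set A : Matrix (Fin 3) (Fin 3) ℝ := C * M⁻¹ with hA
  set a : Fin 3 → ℝ := M.mulVec u with ha
  set b : Fin 3 → ℝ := M.mulVec v with hb
  have hMinv : M⁻¹ * M = 1 := Matrix.nonsing_inv_mul M (Matrix.isUnit_iff_isUnit_det M |>.mp hM)
  have hAM : A * M = C := by rw [hA, Matrix.mul_assoc, hMinv, Matrix.mul_one]
  have hc : C.mulVec u = A.mulVec a := by rw [ha, Matrix.mulVec_mulVec, hAM]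
  have hd : C.mulVec v = A.mulVec b := by rw [hb, Matrix.mulVec_mulVec, hAM]
  -- components of the polynomial expansion of w
  set e0 : Fin 3 → ℝ := crossProduct a b with he0
  set e1 : Fin 3 → ℝ := crossProduct a (A.mulVec b) + crossProduct (A.mulVec a) b with he1
  set e2 : Fin 3 → ℝ := crossProduct (A.mulVec a) (A.mulVec b) with he2
  have hwt : ∀ t : ℝ, w t = e0 + t • e1 + (t * t) • e2 := by
    intro t
    rw [hw t]
    have h1 : (M + t • C).mulVec u = a + t • A.mulVec a := by
      rw [Matrix.add_mulVec, Matrix.smul_mulVec, hc, ha]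
    have h2 : (M + t • C).mulVec v = b + t • A.mulVec b := by
      rw [Matrix.add_mulVec, Matrix.smul_mulVec, hd, hb]
    rw [h1, h2]
    simp only [LinearMap.map_add, LinearMap.map_smul, LinearMap.add_apply,
      LinearMap.smul_apply, he0, he1, he2]
    ext i
    simp [smul_smul]
    ring
  have hw0 : w 0 = e0 := by rw [hwt 0]; simp
  -- positivity of q = ⟨w0, w0⟩
  have he0ne : e0 ≠ 0 := by
    rw [he0]
    refine crossProduct_ne_zero_iff_linearIndependent.mpr ?_
    have hinj : Function.Injective M.mulVec := by
      rw [Matrix.mulVec_injective_iff_isUnit]; exact hM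
    have : LinearIndependent ℝ (M.mulVecLin ∘ ![u, v]) := by
      refine huv.map' M.mulVecLin ?_
      rw [LinearMap.ker_eq_bot]
      exact hinj
    have heq : M.mulVecLin ∘ ![u, v] = ![a, b] := by
      ext i j
      fin_cases i <;> simp [ha, hb]
    rwa [heq] at this
  set q : ℝ := e0 ⬝ᵥ e0 with hq
  have hqpos : 0 < q := by
    have := Matrix.dotProduct_self_star_pos_iff (v := e0) |>.mpr he0ne
    simpa [hq] using this
  have hsq : Real.sqrt q > 0 := Real.sqrt_pos.mpr hqpos
  have hsqne : Real.sqrt q ≠ 0 := ne_of_gt hsq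
  have hsqsq : Real.sqrt q * Real.sqrt q = q := Real.mul_self_sqrt hqpos.le
  have hνval : A.mulVec ν ⬝ᵥ ν = (Real.sqrt q)⁻¹ * ((Real.sqrt q)⁻¹ * (A.mulVec e0 ⬝ᵥ e0)) := by
    rw [hν, hw0, ← hq]
    rw [Matrix.mulVec_smul, smul_dotProduct, dotProduct_smul]
    simp only [smul_eq_mul]
  -- the scalar polynomial g(t) = ⟨w t, w t⟩
  set A0 : ℝ := e0 ⬝ᵥ e0 with hA0
  set A1 : ℝ := e0 ⬝ᵥ e1 + e1 ⬝ᵥ e0 with hA1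
  set A2 : ℝ := e0 ⬝ᵥ e2 + e1 ⬝ᵥ e1 + e2 ⬝ᵥ e0 with hA2
  set A3 : ℝ := e1 ⬝ᵥ e2 + e2 ⬝ᵥ e1 with hA3
  set A4 : ℝ := e2 ⬝ᵥ e2 with hA4
  have hgt : ∀ t : ℝ, w t ⬝ᵥ w t = A0 + A1 * t + A2 * t ^ 2 + A3 * t ^ 3 + A4 * t ^ 4 := by
    intro t
    rw [hwt t]
    simp only [add_dotProduct, dotProduct_add, smul_dotProduct,
      dotProduct_smul, smul_eq_mul, hA0, hA1, hA2, hA3, hA4]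
    ring
  -- derivative of g at 0 is A1
  have hG : HasDerivAt (fun t : ℝ => A0 + A1 * t + A2 * t ^ 2 + A3 * t ^ 3 + A4 * t ^ 4) A1 0 := by
    have h : HasDerivAt (fun t : ℝ => A0 + A1 * t + A2 * t ^ 2 + A3 * t ^ 3 + A4 * t ^ 4)
        (0 + A1 * 1 + A2 * (2 * 0 ^ 1) + A3 * (3 * 0 ^ 2) + A4 * (4 * 0 ^ 3)) 0 := by
      exact ((((hasDerivAt_const (0:ℝ) A0).add
        ((hasDerivAt_id (0:ℝ)).const_mul A1)).add
        ((hasDerivAt_pow 2 (0:ℝ)).const_mul A2)).add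
        ((hasDerivAt_pow 3 (0:ℝ)).const_mul A3)).add
        ((hasDerivAt_pow 4 (0:ℝ)).const_mul A4)
    simpa using h
  have hg : HasDerivAt (fun t : ℝ => w t ⬝ᵥ w t) A1 0 := by
    have : (fun t : ℝ => w t ⬝ᵥ w t)
        = fun t : ℝ => A0 + A1 * t + A2 * t ^ 2 + A3 * t ^ 3 + A4 * t ^ 4 := funext hgt
    rw [this]; exact hG
  have hg0 : w 0 ⬝ᵥ w 0 = q := by rw [hw0]
  -- compose with sqrt
  have hsqrt : HasDerivAt (fun t : ℝ => Real.sqrt (w t ⬝ᵥ w t))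
      (1 / (2 * Real.sqrt q) * A1) 0 := by
    have h := (Real.hasDerivAt_sqrt (x := w 0 ⬝ᵥ w 0) (by rw [hg0]; exact ne_of_gt hqpos)).comp 0 hg
    rw [hg0] at h
    exact h
  -- identify the derivative value
  have hkey : e0 ⬝ᵥ e1 = q * A.trace - A.mulVec e0 ⬝ᵥ e0 := by
    rw [he1, he0, hq]
    exact key_cross_identity A a b
  have hA1val : A1 = 2 * (q * A.trace - A.mulVec e0 ⬝ᵥ e0) := by
    rw [hA1, dotProduct_comm e1 e0, hkey]; ring
  have hfinal : 1 / (2 * Real.sqrt q) * A1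
      = Real.sqrt (w 0 ⬝ᵥ w 0) * (A.trace - A.mulVec ν ⬝ᵥ ν) := by
    rw [hg0, hA1val, hνval]
    field_simp
    ring_nf
    rw [Real.sq_sqrt hqpos.le]
    ring
  rw [← hfinal]
  exact hsqrt
end

section
/- Let M and C be real 3×3 matrices with M invertible, and let u, v ∈ ℝ³ be linearly independent. Define w(t) = ((M + tC)u) × ((M + tC)v) for t ∈ ℝ (so w(0) = (Mu) × (Mv) ≠ 0), let ν = w(0)/‖w(0)‖, and set B = C M⁻¹. Then the function t ↦ w(t)/‖w(t)‖ is differentiable at t = 0 and its derivative equals −( Bᵀ ν − ⟨Bᵀ ν, ν⟩ ν ), where ⟨·,·⟩ is the Euclidean inner product and × the cross product in ℝ³. -/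
/-!
With `x = Mu`, `y = Mv` we have `Cu = Bx`, `Cv = By`, so by the product rule
`w'(0) = x × By + Bx × y = tr(B) w(0) - Bᵀ w(0)`. Differentiating `z ↦ z / ‖z‖` gives the
component of `z'/‖z‖` orthogonal to `z / ‖z‖`; this kills the multiple `tr(B) w(0)` of the normal
and leaves `-(Bᵀν - ⟨Bᵀν, ν⟩ν)`.
-/

open Matrix

theorem crossProduct_mulVec_add_mulVec_crossProduct {R : Type*} [CommRing R]
    (B : Matrix (Fin 3) (Fin 3) R) (x y : Fin 3 → R) :
    x ⨯₃ (B *ᵥ y) + (B *ᵥ x) ⨯₃ y = B.trace • (x ⨯₃ y) - Bᵀ *ᵥ (x ⨯₃ y) := by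
  ext i
  fin_cases i <;>
    simp [cross_apply, mulVec, trace, dotProduct, Fin.sum_univ_three] <;> ring

theorem crossProduct_mulVec_ne_zero {K : Type*} [Field K] {M : Matrix (Fin 3) (Fin 3) K}
    (hM : IsUnit M) {u v : Fin 3 → K} (huv : LinearIndependent K ![u, v]) :
    (M *ᵥ u) ⨯₃ (M *ᵥ v) ≠ 0 := by
  have hMuv : ![M *ᵥ u, M *ᵥ v] = M.mulVecLin ∘ ![u, v] := by
    ext i : 1
    fin_cases i <;> rfl
  rw [crossProduct_ne_zero_iff_linearIndependent, hMuv]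
  exact huv.map' _ (LinearMap.ker_eq_bot.mpr (mulVec_injective_iff_isUnit.mpr hM))

theorem HasDerivAt.crossProduct {f g : ℝ → Fin 3 → ℝ} {f' g' : Fin 3 → ℝ} {t : ℝ}
    (hf : HasDerivAt f f' t) (hg : HasDerivAt g g' t) :
    HasDerivAt (fun s => f s ⨯₃ g s) (f t ⨯₃ g' + f' ⨯₃ g t) t :=
  (_root_.crossProduct : (Fin 3 → ℝ) →ₗ[ℝ] _ →ₗ[ℝ] _).toContinuousBilinearMap
    |>.hasDerivAt_of_bilinear (fun _ => hf) (fun _ => hg)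

theorem HasDerivAt.dotProduct {ι : Type*} [Fintype ι] {f g : ℝ → ι → ℝ} {f' g' : ι → ℝ} {t : ℝ}
    (hf : HasDerivAt f f' t) (hg : HasDerivAt g g' t) :
    HasDerivAt (fun s => f s ⬝ᵥ g s) (f t ⬝ᵥ g' + f' ⬝ᵥ g t) t :=
  (dotProductBilin ℝ ℝ : (ι → ℝ) →ₗ[ℝ] _ →ₗ[ℝ] ℝ).toContinuousBilinearMap
    |>.hasDerivAt_of_bilinear (fun _ => hf) (fun _ => hg)

theorem hasDerivAt_add_smul_mulVec {m n : Type*} [Fintype m] [Fintype n]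
    (M C : Matrix m n ℝ) (u : n → ℝ) (t : ℝ) :
    HasDerivAt (fun s : ℝ => (M + s • C) *ᵥ u) (C *ᵥ u) t := by
  simp only [add_mulVec, smul_mulVec]
  simpa using ((hasDerivAt_id t).smul_const (C *ᵥ u)).const_add (M *ᵥ u)

section UnitVec

variable {ι : Type*} [Fintype ι]

noncomputable def unitVec (x : ι → ℝ) : ι → ℝ := (√(x ⬝ᵥ x))⁻¹ • x

theorem dotProduct_self_nonneg (x : ι → ℝ) : 0 ≤ x ⬝ᵥ x := by
  simpa using dotProduct_star_self_nonneg x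

theorem sqrt_dotProduct_self_pos {x : ι → ℝ} (hx : x ≠ 0) : 0 < √(x ⬝ᵥ x) :=
  Real.sqrt_pos.mpr <| (dotProduct_self_nonneg x).lt_of_ne' (dotProduct_self_eq_zero.not.mpr hx)

theorem sqrt_smul_unitVec {x : ι → ℝ} (hx : x ≠ 0) : √(x ⬝ᵥ x) • unitVec x = x := by
  rw [unitVec, smul_inv_smul₀ (sqrt_dotProduct_self_pos hx).ne']

theorem unitVec_dotProduct_self {x : ι → ℝ} (hx : x ≠ 0) : unitVec x ⬝ᵥ unitVec x = 1 := by
  have hs := sqrt_dotProduct_self_pos hx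
  simp only [unitVec, smul_dotProduct, dotProduct_smul, smul_eq_mul]
  rw [← mul_assoc, ← mul_inv, Real.mul_self_sqrt (dotProduct_self_nonneg x),
    inv_mul_cancel₀ (dotProduct_self_eq_zero.not.mpr hx)]

theorem HasDerivAt.unitVec {f : ℝ → ι → ℝ} {f' : ι → ℝ} {t : ℝ} (hf : HasDerivAt f f' t)
    (hft : f t ≠ 0) :
    HasDerivAt (fun s => unitVec (f s))
      ((√(f t ⬝ᵥ f t))⁻¹ • (f' - (f' ⬝ᵥ unitVec (f t)) • unitVec (f t))) t := by
  have hs := sqrt_dotProduct_self_pos hft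
  have hnorm := ((hf.dotProduct hf).sqrt (Real.sqrt_pos.mp hs).ne').inv hs.ne'
  refine (hnorm.smul hf).congr_deriv ?_
  ext i
  simp only [_root_.unitVec, Pi.add_apply, Pi.smul_apply, Pi.sub_apply, Pi.inv_apply, smul_eq_mul,
    dotProduct_smul, dotProduct_comm f' (f t)]
  field_simp
  ring

end UnitVec

open Matrix in
/-- Pointwise form (d = 3) of Lemma (N) of the paper: derivative at `t = 0` of the
transported unit normal `w(t)/‖w(t)‖`, `w(t) = ((M+tC)u) × ((M+tC)v)`, equals
`−(Bᵀν − ⟨Bᵀν, ν⟩ν)` with `B = CM⁻¹` and `ν = w(0)/‖w(0)‖`. -/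
theorem stmt5 (M C : Matrix (Fin 3) (Fin 3) ℝ) (hM : IsUnit M)
    (u v : Fin 3 → ℝ) (huv : LinearIndependent ℝ ![u, v])
    (w : ℝ → Fin 3 → ℝ)
    (hw : ∀ t : ℝ, w t = crossProduct ((M + t • C).mulVec u) ((M + t • C).mulVec v))
    (ν : Fin 3 → ℝ) (hν : ν = (Real.sqrt (w 0 ⬝ᵥ w 0))⁻¹ • w 0)
    (B : Matrix (Fin 3) (Fin 3) ℝ) (hB : B = C * M⁻¹) :
    HasDerivAt (fun t : ℝ => (Real.sqrt (w t ⬝ᵥ w t))⁻¹ • w t)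
      (-(Bᵀ.mulVec ν - (Bᵀ.mulVec ν ⬝ᵥ ν) • ν)) 0 := by
  have hC : ∀ x, C *ᵥ x = B *ᵥ (M *ᵥ x) := fun x => by
    rw [mulVec_mulVec, hB, M.nonsing_inv_mul_cancel_right C ((isUnit_iff_isUnit_det M).mp hM)]
  have hw0 : w 0 = (M *ᵥ u) ⨯₃ (M *ᵥ v) := by simp [hw]
  have hw0_ne : w 0 ≠ 0 := hw0 ▸ crossProduct_mulVec_ne_zero hM huv
  have hν_unit : ν ⬝ᵥ ν = 1 := hν ▸ unitVec_dotProduct_self hw0_ne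
  set s := √(w 0 ⬝ᵥ w 0)
  have hs : 0 < s := sqrt_dotProduct_self_pos hw0_ne
  have hw' : HasDerivAt w (s • (B.trace • ν - Bᵀ *ᵥ ν)) 0 := by
    have hsν : s • ν = w 0 := hν ▸ sqrt_smul_unitVec hw0_ne
    have h := (hasDerivAt_add_smul_mulVec M C u 0).crossProduct
      (hasDerivAt_add_smul_mulVec M C v 0)
    rw [← funext hw, hC, hC, zero_smul, add_zero,
      crossProduct_mulVec_add_mulVec_crossProduct, ← hw0, ← hsν, mulVec_smul] at h
    convert h using 1
    module
  refine (hw'.unitVec hw0_ne).congr_deriv ?_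
  rw [show unitVec (w 0) = ν from hν.symm]
  change s⁻¹ • _ = _
  rw [smul_dotProduct, smul_eq_mul, mul_smul, ← smul_sub, inv_smul_smul₀ hs.ne',
    sub_dotProduct, smul_dotProduct, hν_unit, dotProduct_comm]
  module
end

section
/- Let d ≥ 2, let f : ℝ^d → ℝ be twice continuously differentiable, and suppose Γ = f⁻¹({0}) is nonempty and compact with ∇f(y) ≠ 0 for every y ∈ Γ. Define the unit normal n(y) = ∇f(y)/‖∇f(y)‖ for y ∈ Γ. Then there exists a constant C > 0 such that for all x, y ∈ Γ, |⟨n(y), x − y⟩| ≤ C ‖x − y‖². -/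
/-!
On a compact set a C² function has a first-order Taylor remainder of order `‖x - y‖²`, since
its derivative is Lipschitz on a ball containing the set. For `x, y` on the level set
`f = 0` the Taylor remainder at `y` is `-f'(y)(x - y) = -⟪∇f y, x - y⟫`, and `‖∇f‖` is bounded
below on the compact level set because it is continuous and nonvanishing there.
-/

open scoped NNReal Gradient
open Metric InnerProductSpace

section Taylor

variable {E F : Type*} [NormedAddCommGroup E] [NormedSpace ℝ E]
  [NormedAddCommGroup F] [NormedSpace ℝ F]

theorem Convex.norm_image_sub_sub_fderiv_le_of_lipschitzOnWith {f : E → F} {s : Set E}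
    {K : ℝ≥0} (hs : Convex ℝ s) (hf : ∀ z ∈ s, DifferentiableAt ℝ f z)
    (hlip : LipschitzOnWith K (fderiv ℝ f) s) {x y : E} (hx : x ∈ s) (hy : y ∈ s) :
    ‖f x - f y - fderiv ℝ f y (x - y)‖ ≤ K * ‖x - y‖ ^ 2 := by
  have hseg : segment ℝ y x ⊆ s := hs.segment_subset hy hx
  have bound : ∀ z ∈ segment ℝ y x, ‖fderiv ℝ f z - fderiv ℝ f y‖ ≤ K * ‖x - y‖ :=
    fun z hz => calc
      ‖fderiv ℝ f z - fderiv ℝ f y‖ ≤ K * ‖z - y‖ := hlip.norm_sub_le (hseg hz) hy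
      _ ≤ K * ‖x - y‖ := by gcongr; exact norm_sub_le_of_mem_segment hz
  calc ‖f x - f y - fderiv ℝ f y (x - y)‖ ≤ K * ‖x - y‖ * ‖x - y‖ :=
        (convex_segment y x).norm_image_sub_le_of_norm_fderiv_le' (fun z hz => hf z (hseg hz))
          bound (left_mem_segment ℝ y x) (right_mem_segment ℝ y x)
    _ = K * ‖x - y‖ ^ 2 := by ring

theorem ContDiff.exists_norm_image_sub_sub_fderiv_le [ProperSpace E] {f : E → F}
    (hf : ContDiff ℝ 2 f) {k : Set E} (hk : IsCompact k) :
    ∃ C : ℝ≥0, ∀ x ∈ k, ∀ y ∈ k, ‖f x - f y - fderiv ℝ f y (x - y)‖ ≤ C * ‖x - y‖ ^ 2 := by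
  obtain ⟨r, hr⟩ := hk.isBounded.subset_closedBall 0
  obtain ⟨C, hC⟩ := (hf.fderiv_right (m := 1) le_rfl).contDiffOn.exists_lipschitzOnWith
    one_ne_zero (convex_closedBall 0 r) (isCompact_closedBall 0 r)
  exact ⟨C, fun x hx y hy => (convex_closedBall 0 r).norm_image_sub_sub_fderiv_le_of_lipschitzOnWith
    (fun z _ => (hf.differentiable two_ne_zero).differentiableAt) hC (hr hx) (hr hy)⟩

end Taylor

section Gradient

variable {E : Type*} [NormedAddCommGroup E] [InnerProductSpace ℝ E] [CompleteSpace E]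

theorem ContDiff.continuous_gradient {f : E → ℝ} {n : WithTop ℕ∞} (hf : ContDiff ℝ n f)
    (hn : n ≠ 0) : Continuous (∇ f) :=
  (toDual ℝ E).symm.continuous.comp (hf.continuous_fderiv hn)

theorem abs_inner_normalize_gradient (f : E → ℝ) (y v : E) :
    |⟪‖∇ f y‖⁻¹ • ∇ f y, v⟫_ℝ| = ‖∇ f y‖⁻¹ * ‖fderiv ℝ f y v‖ := by
  rw [real_inner_smul_left, inner_gradient_left, abs_mul, abs_inv, abs_norm, Real.norm_eq_abs]

end Gradient

theorem stmt10_general (d : ℕ) (f : EuclideanSpace ℝ (Fin d) → ℝ)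
    (hf : ContDiff ℝ 2 f)
    (hcomp : IsCompact (f ⁻¹' {0}))
    (hgrad : ∀ y ∈ f ⁻¹' {0}, gradient f y ≠ 0) :
    ∃ C > (0:ℝ), ∀ x ∈ f ⁻¹' {0}, ∀ y ∈ f ⁻¹' {0},
      |(inner ℝ ((‖gradient f y‖)⁻¹ • gradient f y) (x - y) : ℝ)| ≤ C * ‖x - y‖ ^ 2 := by
  obtain ⟨C, hC⟩ := hf.exists_norm_image_sub_sub_fderiv_le hcomp
  obtain ⟨m, hm, hm_le⟩ := hcomp.exists_forall_le'
    (hf.continuous_gradient two_ne_zero).norm.continuousOn fun y hy => norm_pos_iff.2 (hgrad y hy)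
  refine ⟨(C + 1) / m, by positivity, fun x hx y hy => ?_⟩
  have hfx : f x = 0 := hx
  have hfy : f y = 0 := hy
  calc |⟪‖∇ f y‖⁻¹ • ∇ f y, x - y⟫_ℝ|
      = ‖∇ f y‖⁻¹ * ‖f x - f y - fderiv ℝ f y (x - y)‖ := by
        rw [abs_inner_normalize_gradient, hfx, hfy, sub_self, zero_sub, norm_neg]
    _ ≤ m⁻¹ * (C * ‖x - y‖ ^ 2) := by
        gcongr
        exacts [hm_le y hy, hC x hx y hy]
    _ ≤ (C + 1) / m * ‖x - y‖ ^ 2 := by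
        rw [div_eq_inv_mul, mul_assoc]
        gcongr
        linarith

/-- Example 2.4 of the paper (following Nédélec): on a compact regular level set Γ of a
C² function, `g(x,y) = n(y)·(x−y)` behaves as `|x−y|²`, with `n = ∇f/‖∇f‖`. -/
theorem stmt10 (d : ℕ) (hd : 2 ≤ d) (f : EuclideanSpace ℝ (Fin d) → ℝ)
    (hf : ContDiff ℝ 2 f)
    (hne : (f ⁻¹' {0}).Nonempty) (hcomp : IsCompact (f ⁻¹' {0}))
    (hgrad : ∀ y ∈ f ⁻¹' {0}, gradient f y ≠ 0) :
    ∃ C > (0:ℝ), ∀ x ∈ f ⁻¹' {0}, ∀ y ∈ f ⁻¹' {0},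
      |(inner ℝ ((‖gradient f y‖)⁻¹ • gradient f y) (x - y) : ℝ)| ≤ C * ‖x - y‖ ^ 2 :=
  stmt10_general d f hf hcomp hgrad
end
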